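/- Bounded inaccessible information of the Kochen–Specker model: let (p_i, ŝ_i)_{i∈I} and (p'_j, ŝ'_j)_{j∈J} be two finite ensembles of unit vectors in ℝ³ with equal averages Σ_i p_i ŝ_i = Σ_j p'_j ŝ'_j. Define μ = Σ_i p_i μ_i and μ' = Σ_j p'_j μ'_j where μ_i(n) = 4(n·ŝ_i)Θ(n·ŝ_i) (and similarly for μ'_j) are densities with respect to the normalized rotation-invariant measure σ on S². Then (1/2)∫_{S²} |μ(n) − μ'(n)| dσ(n) ≤ 1/2. -/

import Mathlib

open MeasureTheory
open scoped RealInnerProductSpace Pointwise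

/-- The normalized (total mass one) rotation-invariant surface measure on the unit sphere
`S² ⊂ ℝ³`, obtained by normalizing the surface measure induced by the Lebesgue measure. -/
noncomputable def sphereMeasure : Measure (Metric.sphere (0 : EuclideanSpace ℝ (Fin 3)) 1) :=
  ((volume : Measure (EuclideanSpace ℝ (Fin 3))).toSphere Set.univ)⁻¹ •
    (volume : Measure (EuclideanSpace ℝ (Fin 3))).toSphere

abbrev E3 : Type := EuclideanSpace ℝ (Fin 3)
abbrev Sph : Set E3 := Metric.sphere (0 : E3) 1

lemma mem_aux (O : E3 ≃ₗᵢ[ℝ] E3) (n : Sph) : O (n : E3) ∈ Sph := by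
  have h := mem_sphere_zero_iff_norm.mp n.2
  simp [mem_sphere_zero_iff_norm, h]

noncomputable def rotSph (O : E3 ≃ₗᵢ[ℝ] E3) : Sph ≃ₜ Sph where
  toFun n := ⟨O n, mem_aux O n⟩
  invFun n := ⟨O.symm n, mem_aux O.symm n⟩
  left_inv n := Subtype.ext (O.symm_apply_apply n)
  right_inv n := Subtype.ext (O.apply_symm_apply n)
  continuous_toFun := Continuous.subtype_mk (O.continuous.comp continuous_subtype_val) _
  continuous_invFun := Continuous.subtype_mk (O.symm.continuous.comp continuous_subtype_val) _

lemma map_toSphere (O : E3 ≃ₗᵢ[ℝ] E3) :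
    Measure.map (rotSph O) (volume : Measure E3).toSphere = (volume : Measure E3).toSphere := by
  refine Measure.ext fun t ht => ?_
  rw [Measure.map_apply (rotSph O).continuous.measurable ht,
    Measure.toSphere_apply' _ (ht.preimage (rotSph O).continuous.measurable),
    Measure.toSphere_apply' _ ht]
  congr 1
  have himg : ((↑) '' ((rotSph O) ⁻¹' t) : Set E3) = O.symm '' ((↑) '' t) := by
    ext x
    constructor
    · rintro ⟨n, hn, rfl⟩
      exact ⟨O n, ⟨(rotSph O) n, hn, rfl⟩, O.symm_apply_apply _⟩
    · rintro ⟨y, ⟨m, hm, rfl⟩, rfl⟩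
      exact ⟨⟨O.symm m, mem_aux O.symm m⟩, by
        simpa [rotSph, Subtype.ext_iff, O.apply_symm_apply] using hm, rfl⟩
  rw [himg]
  have hsmul : Set.Ioo (0:ℝ) 1 • (O.symm '' ((↑) '' t)) =
      O.symm '' (Set.Ioo (0:ℝ) 1 • ((↑) '' t)) := by
    ext z
    constructor
    · rintro ⟨r, hr, y, ⟨x, hx, rfl⟩, rfl⟩
      exact ⟨r • x, ⟨r, hr, x, hx, rfl⟩, (O.symm.map_smul r x)⟩
    · rintro ⟨y, ⟨r, hr, x, hx, rfl⟩, rfl⟩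
      exact ⟨r, hr, O.symm x, ⟨x, hx, rfl⟩, (O.symm.map_smul r x).symm⟩
  rw [hsmul]
  have : O.symm '' (Set.Ioo (0:ℝ) 1 • ((↑) '' t)) = ⇑O ⁻¹' (Set.Ioo (0:ℝ) 1 • ((↑) '' t)) := by
    ext z; simp [Set.mem_image, Set.mem_preimage]
    constructor
    · rintro ⟨y, hy, rfl⟩; simpa [O.apply_symm_apply] using hy
    · intro h; exact ⟨O z, h, O.symm_apply_apply z⟩
  rw [this]
  have hme : MeasurableEmbedding (⇑O) := O.toHomeomorph.measurableEmbedding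
  have h1 := hme.map_apply (volume : Measure E3) (Set.Ioo (0:ℝ) 1 • (Subtype.val '' t))
  rw [O.measurePreserving.map_eq] at h1
  exact h1.symm

lemma measurePreserving_rotSph (O : E3 ≃ₗᵢ[ℝ] E3) :
    MeasurePreserving (rotSph O) sphereMeasure sphereMeasure := by
  refine ⟨(rotSph O).continuous.measurable, ?_⟩
  unfold sphereMeasure
  rw [Measure.map_smul, map_toSphere]

lemma integral_rotSph (O : E3 ≃ₗᵢ[ℝ] E3) (g : Sph → ℝ) :
    ∫ n, g (rotSph O n) ∂sphereMeasure = ∫ n, g n ∂sphereMeasure :=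
  (measurePreserving_rotSph O).integral_comp
    (rotSph O).toMeasurableEquiv.measurableEmbedding g

lemma integral_inner_rot (O : E3 ≃ₗᵢ[ℝ] E3) (g : ℝ → ℝ) (w : E3) :
    ∫ n : Sph, g ⟪(n : E3), O w⟫ ∂sphereMeasure = ∫ n : Sph, g ⟪(n : E3), w⟫ ∂sphereMeasure := by
  have h : ∀ n : Sph, g ⟪(n : E3), O w⟫ =
      (fun m : Sph => g ⟪(m : E3), w⟫) (rotSph O.symm n) := by
    intro n
    have : ⟪(n : E3), O w⟫ = ⟪O.symm (n : E3), w⟫ := by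
      conv_lhs => rw [← O.apply_symm_apply (n : E3)]
      rw [O.inner_map_map]
    simp only [rotSph, Homeomorph.homeomorph_mk_coe, Equiv.coe_fn_mk, this]
  simp only [h]
  exact integral_rotSph O.symm (fun m : Sph => g ⟪(m : E3), w⟫)

noncomputable def L (w : E3) : ℝ := ∫ n : Sph, |⟪(n : E3), w⟫| ∂sphereMeasure

noncomputable def e0 : E3 := EuclideanSpace.single 0 1

lemma exists_rot {u v : E3} (hu : ‖u‖ = 1) (hv : ‖v‖ = 1) :
    ∃ O : E3 ≃ₗᵢ[ℝ] E3, O u = v := by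
  have card : Module.finrank ℝ E3 = Fintype.card (Fin 3) := by
    simp [finrank_euclideanSpace_fin]
  have ortho : ∀ w : E3, ‖w‖ = 1 →
      Orthonormal ℝ (Set.restrict {(0 : Fin 3)} (fun _ => w)) := by
    intro w hw
    constructor
    · intro i; exact hw
    · intro i j hij
      exact absurd (Subtype.ext (by
        have hi := i.2; have hj := j.2
        simp only [Set.mem_singleton_iff] at hi hj
        rw [hi, hj])) hij
  obtain ⟨bu, hbu⟩ := (ortho u hu).exists_orthonormalBasis_extension_of_card_eq card
  obtain ⟨bv, hbv⟩ := (ortho v hv).exists_orthonormalBasis_extension_of_card_eq card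
  refine ⟨bu.repr.trans bv.repr.symm, ?_⟩
  have h1 : u = bu 0 := (hbu 0 rfl).symm
  have h2 : v = bv 0 := (hbv 0 rfl).symm
  rw [h1, h2]
  simp [LinearIsometryEquiv.trans_apply, OrthonormalBasis.repr_self,
    OrthonormalBasis.repr_symm_single]

lemma L_rot (O : E3 ≃ₗᵢ[ℝ] E3) (w : E3) : L (O w) = L w :=
  integral_inner_rot O (fun t => |t|) w

lemma norm_e0 : ‖e0‖ = 1 := by simp [e0, EuclideanSpace.norm_single]

lemma L_eq (w : E3) : L w = ‖w‖ * L e0 := by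
  rcases eq_or_ne w 0 with rfl | hw
  · simp [L]
  · have hnw : ‖w‖ ≠ 0 := norm_ne_zero_iff.mpr hw
    set u : E3 := ‖w‖⁻¹ • w with hu
    have hun : ‖u‖ = 1 := by
      rw [hu, norm_smul]; simp [abs_of_nonneg (inv_nonneg.mpr (norm_nonneg w)),
        inv_mul_cancel₀ hnw]
    obtain ⟨O, hO⟩ := exists_rot norm_e0 hun
    have hw' : w = O (‖w‖ • e0) := by
      rw [O.map_smul, hO, hu, smul_smul, mul_inv_cancel₀ hnw, one_smul]
    have step : L w = L (‖w‖ • e0) := by conv_lhs => rw [hw', L_rot]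
    rw [step]
    unfold L
    have : ∀ n : Sph, |⟪(n : E3), ‖w‖ • e0⟫| = ‖w‖ * |⟪(n : E3), e0⟫| := by
      intro n
      rw [real_inner_smul_right, abs_mul, abs_of_nonneg (norm_nonneg w)]
    simp only [this]
    exact integral_const_mul (‖w‖) (fun n : Sph => |⟪(n : E3), e0⟫|)

instance : IsProbabilityMeasure sphereMeasure := by
  constructor
  unfold sphereMeasure
  rw [Measure.smul_apply, smul_eq_mul]
  have hpos : (volume : Measure E3).toSphere Set.univ ≠ 0 := by
    rw [Measure.toSphere_apply_univ]
    refine mul_ne_zero ?_ ?_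
    · simp [finrank_euclideanSpace_fin]
    · exact (Metric.measure_ball_pos volume 0 one_pos).ne'
  have hfin : (volume : Measure E3).toSphere Set.univ ≠ ⊤ := measure_ne_top _ _
  exact ENNReal.inv_mul_cancel hpos hfin

lemma integrable_cont {f : Sph → ℝ} (hf : Continuous f) : Integrable f sphereMeasure :=
  hf.integrable_of_hasCompactSupport ((isClosed_tsupport f).isCompact)

lemma cont_inner (w : E3) : Continuous fun n : Sph => ⟪(n : E3), w⟫ :=
  continuous_subtype_val.inner continuous_const

lemma Q_eq : ∫ n : Sph, ⟪(n : E3), e0⟫ ^ 2 ∂sphereMeasure = 1 / 3 := by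
  have hQ : ∀ k : Fin 3,
      ∫ n : Sph, ⟪(n : E3), (EuclideanSpace.single k 1 : E3)⟫ ^ 2 ∂sphereMeasure
        = ∫ n : Sph, ⟪(n : E3), e0⟫ ^ 2 ∂sphereMeasure := by
    intro k
    obtain ⟨O, hO⟩ := exists_rot norm_e0 (by simp [EuclideanSpace.norm_single] :
      ‖(EuclideanSpace.single k 1 : E3)‖ = 1)
    rw [← hO]
    exact integral_inner_rot O (fun t => t ^ 2) e0
  have hsum : ∫ n : Sph, (∑ k : Fin 3,
      ⟪(n : E3), (EuclideanSpace.single k 1 : E3)⟫ ^ 2) ∂sphereMeasure = 1 := by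
    have hpt : ∀ n : Sph, (∑ k : Fin 3,
        ⟪(n : E3), (EuclideanSpace.single k 1 : E3)⟫ ^ 2) = 1 := by
      intro n
      have hn : ‖(n : E3)‖ = 1 := mem_sphere_zero_iff_norm.mp n.2
      have : ∀ k : Fin 3, ⟪(n : E3), (EuclideanSpace.single k 1 : E3)⟫ = (n : E3) k := by
        intro k
        rw [EuclideanSpace.inner_single_right]
        simp
      simp only [this]
      have := EuclideanSpace.norm_eq (n : E3)
      rw [hn] at this
      have h2 : (∑ k : Fin 3, ((n : E3) k) ^ 2) = 1 := by
        have := congrArg (fun t : ℝ => t ^ 2) this.symm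
        simpa [Real.sq_sqrt, Finset.sum_nonneg, sq_nonneg,
          Real.sq_sqrt (Finset.sum_nonneg fun k _ => sq_nonneg ((n : E3) k))] using this
      simpa using h2
    simp only [hpt]
    simp
  rw [integral_finset_sum] at hsum
  · simp only [hQ] at hsum
    simp only [Finset.sum_const, Finset.card_univ, Fintype.card_fin, nsmul_eq_mul] at hsum
    push_cast at hsum
    linarith
  · intro k _
    exact integrable_cont ((cont_inner _).pow 2)

lemma L_nonneg (w : E3) : 0 ≤ L w := integral_nonneg fun n => abs_nonneg _

lemma L_le : L e0 ≤ 26 / 45 := by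
  have hpt : ∀ n : Sph, |⟪(n : E3), e0⟫| ≤ 5/6 * ⟪(n : E3), e0⟫ ^ 2 + 3/10 := by
    intro n
    nlinarith [sq_nonneg (|⟪(n : E3), e0⟫| - 3/5), sq_abs ⟪(n : E3), e0⟫]
  have hint : ∫ n : Sph, (5/6 * ⟪(n : E3), e0⟫ ^ 2 + 3/10) ∂sphereMeasure = 26/45 := by
    rw [integral_add (((integrable_cont (f := fun n : Sph => ⟪(n : E3), e0⟫ ^ 2)
      ((cont_inner _).pow 2))).const_mul _)
      (integrable_const _), integral_const_mul, Q_eq, integral_const]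
    simp [measure_univ]
    norm_num
  calc L e0 ≤ ∫ n : Sph, (5/6 * ⟪(n : E3), e0⟫ ^ 2 + 3/10) ∂sphereMeasure := by
        refine integral_mono (integrable_cont (cont_inner _).abs) ?_ hpt
        exact ((integrable_cont ((cont_inner _).pow 2)).const_mul _).add (integrable_const _)
    _ = 26/45 := hint

lemma abs_abs_sub_abs (x y : ℝ) : |(|x| - |y|)| = |x - y| + |x + y| - |x| - |y| := by
  rcases abs_cases x with ⟨h1, h1'⟩ | ⟨h1, h1'⟩ <;>
    rcases abs_cases y with ⟨h2, h2'⟩ | ⟨h2, h2'⟩ <;>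
    rcases abs_cases (x - y) with ⟨h3, h3'⟩ | ⟨h3, h3'⟩ <;>
    rcases abs_cases (x + y) with ⟨h4, h4'⟩ | ⟨h4, h4'⟩ <;>
    rcases abs_cases (|x| - |y|) with ⟨h5, h5'⟩ | ⟨h5, h5'⟩ <;>
    linarith

lemma pair_bound (u v : E3) (hu : ‖u‖ = 1) (hv : ‖v‖ = 1) :
    ∫ n : Sph, |(|⟪(n : E3), u⟫| - |⟪(n : E3), v⟫|)| ∂sphereMeasure ≤ 1/2 := by
  have hpt : ∀ n : Sph, |(|⟪(n : E3), u⟫| - |⟪(n : E3), v⟫|)| =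
      |⟪(n : E3), u - v⟫| + |⟪(n : E3), u + v⟫| - |⟪(n : E3), u⟫| - |⟪(n : E3), v⟫| := by
    intro n
    rw [inner_sub_right, inner_add_right]
    exact abs_abs_sub_abs _ _
  have hL : ∫ n : Sph, |(|⟪(n : E3), u⟫| - |⟪(n : E3), v⟫|)| ∂sphereMeasure
      = L (u - v) + L (u + v) - L u - L v := by
    simp only [hpt]
    unfold L
    rw [integral_sub (integrable_cont (f := fun n : Sph =>
        |⟪(n : E3), u - v⟫| + |⟪(n : E3), u + v⟫| - |⟪(n : E3), u⟫|)
        (((cont_inner (u - v)).abs.add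
        (cont_inner (u + v)).abs).sub (cont_inner u).abs))
        (integrable_cont (cont_inner v).abs),
      integral_sub (integrable_cont (f := fun n : Sph => |⟪(n : E3), u - v⟫| + |⟪(n : E3), u + v⟫|)
          ((cont_inner (u - v)).abs.add (cont_inner (u + v)).abs))
        (integrable_cont (cont_inner u).abs),
      integral_add (integrable_cont (cont_inner (u - v)).abs)
        (integrable_cont (cont_inner (u + v)).abs)]
  rw [hL, L_eq (u - v), L_eq (u + v), L_eq u, L_eq v, hu, hv]
  have hpar : ‖u - v‖ ^ 2 + ‖u + v‖ ^ 2 = 4 := by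
    have h1 := norm_add_sq_real u v
    have h2 := norm_sub_sq_real u v
    rw [hu, hv] at h1 h2
    nlinarith
  have hX : ‖u - v‖ + ‖u + v‖ ≤ 2.86 := by
    nlinarith [sq_nonneg (‖u - v‖ + ‖u + v‖ - 2.86), sq_nonneg (‖u - v‖ - ‖u + v‖),
      norm_nonneg (u - v), norm_nonneg (u + v)]
  have hL1 := L_le
  have hL0 := L_nonneg e0
  nlinarith [mul_le_mul_of_nonneg_right hX hL0]

lemma expand_aux {K : Type*} [Fintype K] (q : K → ℝ) (w : K → E3) (n : Sph) :
    (∑ k, q k * (4 * ⟪(n : E3), w k⟫ * (if 0 ≤ ⟪(n : E3), w k⟫ then 1 else 0)))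
      = 2 * ⟪(n : E3), ∑ k, q k • w k⟫ + 2 * ∑ k, q k * |⟪(n : E3), w k⟫| := by
  have h4 : ∀ t : ℝ, 4 * t * (if 0 ≤ t then 1 else 0) = 2 * t + 2 * |t| := by
    intro t
    split_ifs with h
    · rw [abs_of_nonneg h]; ring
    · rw [abs_of_neg (lt_of_not_ge h)]; ring
  rw [inner_sum, Finset.mul_sum, Finset.mul_sum, ← Finset.sum_add_distrib]
  refine Finset.sum_congr rfl fun k _ => ?_
  rw [h4, real_inner_smul_right]
  ring

lemma contii_aux {K : Type*} [Fintype K] (q : K → ℝ) (w : K → E3) :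
    Continuous fun n : Sph => ∑ k, q k * |⟪(n : E3), w k⟫| :=
  continuous_finset_sum _ fun k _ => continuous_const.mul (cont_inner (w k)).abs

/-- bounded inaccessible information of the Kochen–Specker model: two
finite ensembles of Bloch vectors with the same average give mixture densities whose
total variation distance is at most `1/2`. -/
theorem stmt_8 {I J : Type*} [Fintype I] [Fintype J]
    (p : I → ℝ) (p' : J → ℝ)
    (s : I → EuclideanSpace ℝ (Fin 3)) (s' : J → EuclideanSpace ℝ (Fin 3))
    (hp0 : ∀ i, 0 ≤ p i) (hp1 : ∑ i, p i = 1)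
    (hp'0 : ∀ j, 0 ≤ p' j) (hp'1 : ∑ j, p' j = 1)
    (hs : ∀ i, ‖s i‖ = 1) (hs' : ∀ j, ‖s' j‖ = 1)
    (havg : ∑ i, p i • s i = ∑ j, p' j • s' j) :
    (1/2) * ∫ n : Metric.sphere (0 : EuclideanSpace ℝ (Fin 3)) 1,
        |(∑ i, p i * (4 * ⟪(n : EuclideanSpace ℝ (Fin 3)), s i⟫ *
              (if 0 ≤ ⟪(n : EuclideanSpace ℝ (Fin 3)), s i⟫ then 1 else 0))) -
          (∑ j, p' j * (4 * ⟪(n : EuclideanSpace ℝ (Fin 3)), s' j⟫ *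
              (if 0 ≤ ⟪(n : EuclideanSpace ℝ (Fin 3)), s' j⟫ then 1 else 0)))| ∂sphereMeasure
      ≤ 1/2 := by
  classical
  have h4 : ∀ t : ℝ, 4 * t * (if 0 ≤ t then 1 else 0) = 2 * t + 2 * |t| := by
    intro t
    split_ifs with h
    · rw [abs_of_nonneg h]; ring
    · rw [abs_of_neg (lt_of_not_ge h)]; ring
  have key : ∀ n : Sph,
      |(∑ i, p i * (4 * ⟪(n : E3), s i⟫ * (if 0 ≤ ⟪(n : E3), s i⟫ then 1 else 0))) -
        (∑ j, p' j * (4 * ⟪(n : E3), s' j⟫ * (if 0 ≤ ⟪(n : E3), s' j⟫ then 1 else 0)))|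
      = 2 * |(∑ i, p i * |⟪(n : E3), s i⟫|) - (∑ j, p' j * |⟪(n : E3), s' j⟫|)| := by
    intro n
    rw [expand_aux p s n, expand_aux p' s' n, havg]
    rw [show (2 * ⟪(n : E3), ∑ j, p' j • s' j⟫ + 2 * ∑ i, p i * |⟪(n : E3), s i⟫|) -
        (2 * ⟪(n : E3), ∑ j, p' j • s' j⟫ + 2 * ∑ j, p' j * |⟪(n : E3), s' j⟫|)
        = 2 * ((∑ i, p i * |⟪(n : E3), s i⟫|) - ∑ j, p' j * |⟪(n : E3), s' j⟫|) from by ring]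
    rw [abs_mul]
    norm_num
  simp only [key]
  rw [integral_const_mul]
  have main : ∫ n : Sph, |(∑ i, p i * |⟪(n : E3), s i⟫|) - (∑ j, p' j * |⟪(n : E3), s' j⟫|)|
      ∂sphereMeasure ≤ 1/2 := by
    have hptbd : ∀ n : Sph,
        |(∑ i, p i * |⟪(n : E3), s i⟫|) - (∑ j, p' j * |⟪(n : E3), s' j⟫|)|
          ≤ ∑ i, ∑ j, p i * p' j * |(|⟪(n : E3), s i⟫| - |⟪(n : E3), s' j⟫|)| := by
      intro n
      have hab : (∑ i, p i * |⟪(n : E3), s i⟫|) - (∑ j, p' j * |⟪(n : E3), s' j⟫|)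
          = ∑ i, ∑ j, p i * p' j * ((|⟪(n : E3), s i⟫|) - |⟪(n : E3), s' j⟫|) := by
        have ha : (∑ i, p i * |⟪(n : E3), s i⟫|)
            = ∑ i, ∑ j, p i * p' j * |⟪(n : E3), s i⟫| := by
          have h1 : ∀ i, (∑ j, p i * p' j * |⟪(n : E3), s i⟫|)
              = (∑ j, p' j) * (p i * |⟪(n : E3), s i⟫|) := by
            intro i
            rw [Finset.sum_mul]
            exact Finset.sum_congr rfl fun j _ => by ring
          simp only [h1, hp'1, one_mul]
        have hb : (∑ j, p' j * |⟪(n : E3), s' j⟫|)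
            = ∑ i, ∑ j, p i * p' j * |⟪(n : E3), s' j⟫| := by
          have h1 : ∀ i, (∑ j, p i * p' j * |⟪(n : E3), s' j⟫|)
              = p i * ∑ j, p' j * |⟪(n : E3), s' j⟫| := by
            intro i
            rw [Finset.mul_sum]
            exact Finset.sum_congr rfl fun j _ => by ring
          simp only [h1]
          rw [← Finset.sum_mul, hp1, one_mul]
        rw [ha, hb, ← Finset.sum_sub_distrib]
        refine Finset.sum_congr rfl fun i _ => ?_
        rw [← Finset.sum_sub_distrib]
        refine Finset.sum_congr rfl fun j _ => ?_
        ring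
      rw [hab]
      calc |∑ i, ∑ j, p i * p' j * ((|⟪(n : E3), s i⟫|) - |⟪(n : E3), s' j⟫|)|
          ≤ ∑ i, |∑ j, p i * p' j * ((|⟪(n : E3), s i⟫|) - |⟪(n : E3), s' j⟫|)| :=
            Finset.abs_sum_le_sum_abs _ _
        _ ≤ ∑ i, ∑ j, |p i * p' j * ((|⟪(n : E3), s i⟫|) - |⟪(n : E3), s' j⟫|)| :=
            Finset.sum_le_sum fun i _ => Finset.abs_sum_le_sum_abs _ _
        _ = ∑ i, ∑ j, p i * p' j * |(|⟪(n : E3), s i⟫| - |⟪(n : E3), s' j⟫|)| := by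
            refine Finset.sum_congr rfl fun i _ => Finset.sum_congr rfl fun j _ => ?_
            rw [abs_mul, abs_of_nonneg (mul_nonneg (hp0 i) (hp'0 j))]
    have hint : ∫ n : Sph, |(∑ i, p i * |⟪(n : E3), s i⟫|) - (∑ j, p' j * |⟪(n : E3), s' j⟫|)|
        ∂sphereMeasure
        ≤ ∫ n : Sph, (∑ i, ∑ j, p i * p' j * |(|⟪(n : E3), s i⟫| - |⟪(n : E3), s' j⟫|)|)
          ∂sphereMeasure := by
      refine integral_mono (integrable_cont ?_) (integrable_cont ?_) hptbd
      · exact ((contii_aux p s).sub (contii_aux p' s')).abs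
      · exact continuous_finset_sum _ fun i _ => continuous_finset_sum _ fun j _ =>
          (continuous_const.mul ((cont_inner (s i)).abs.sub (cont_inner (s' j)).abs).abs)
    have hswap : ∫ n : Sph, (∑ i, ∑ j, p i * p' j *
          |(|⟪(n : E3), s i⟫| - |⟪(n : E3), s' j⟫|)|) ∂sphereMeasure
        = ∑ i, ∑ j, p i * p' j *
            ∫ n : Sph, |(|⟪(n : E3), s i⟫| - |⟪(n : E3), s' j⟫|)| ∂sphereMeasure := by
      rw [integral_finset_sum _ fun i _ => ?_]
      · refine Finset.sum_congr rfl fun i _ => ?_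
        rw [integral_finset_sum _ fun j _ => ?_]
        · refine Finset.sum_congr rfl fun j _ => integral_const_mul _ _
        · exact (integrable_cont
            ((continuous_const.mul ((cont_inner (s i)).abs.sub (cont_inner (s' j)).abs).abs)))
      · exact integrable_finset_sum _ fun j _ => (integrable_cont
          ((continuous_const.mul ((cont_inner (s i)).abs.sub (cont_inner (s' j)).abs).abs)))
    calc ∫ n : Sph, |(∑ i, p i * |⟪(n : E3), s i⟫|) - (∑ j, p' j * |⟪(n : E3), s' j⟫|)|
          ∂sphereMeasure ≤ _ := hint
      _ = ∑ i, ∑ j, p i * p' j *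
            ∫ n : Sph, |(|⟪(n : E3), s i⟫| - |⟪(n : E3), s' j⟫|)| ∂sphereMeasure := hswap
      _ ≤ ∑ i, ∑ j, p i * p' j * (1/2) := by
          refine Finset.sum_le_sum fun i _ => Finset.sum_le_sum fun j _ => ?_
          exact mul_le_mul_of_nonneg_left (pair_bound (s i) (s' j) (hs i) (hs' j))
            (mul_nonneg (hp0 i) (hp'0 j))
      _ = 1/2 := by
          simp_rw [← Finset.sum_mul, ← Finset.mul_sum]
          rw [hp'1]
          simp_rw [mul_one]
          rw [hp1, one_mul]
  linarith
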